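/- Let 𝓗 be the Heisenberg group over a field of characteristic ≠ 2 of type (n,...,n) with n odd, with level subgroups W₁ = {(1,x,0)} and W₂ = {(1,0,ℓ)}, and let 𝓗' be the group on the same underlying set μ × K with multiplication (α,P)⋆'(α',P') = (αα'e(P,P')^{1/2}, P+P'), where e is the symplectic form on K. Then the map Φ sending w₁w₂α ↦ (α·e(w̄₁, w̄₂)^{1/2}, w̄₁, w̄₂) is a group isomorphism 𝓗 ≅ 𝓗' that is the identity on the center and on the quotient K. Consequently, the symplectic group Sp(K, e) acts faithfully on 𝓗 by automorphisms trivial on the center, and the sequence 1 → K^ → G₁ → Sp(K) → 1 splits, where G₁ is the group of centrally-trivial automorphisms. -/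
import Mathlib


/-- The Heisenberg group `𝓗(H) = μ × H × H^` as a type. -/
@[ext] structure Heis (μ H : Type*) [CommGroup μ] [CommGroup H] where
  α : μ
  x : H
  ℓ : H →* μ

namespace Heis

variable {μ H : Type*} [CommGroup μ] [CommGroup H]

instance : Group (Heis μ H) where
  mul a b := ⟨a.α * b.α * b.ℓ a.x, a.x * b.x, a.ℓ * b.ℓ⟩
  one := ⟨1, 1, 1⟩
  inv a := ⟨a.α⁻¹ * a.ℓ a.x, a.x⁻¹, a.ℓ⁻¹⟩
  mul_assoc a b c := by
    ext y
    · show (a.α * b.α * b.ℓ a.x) * c.α * c.ℓ (a.x * b.x) =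
        a.α * (b.α * c.α * c.ℓ b.x) * (b.ℓ * c.ℓ) a.x
      simp [map_mul, MonoidHom.mul_apply, mul_assoc, mul_comm, mul_left_comm]
    · show (a.x * b.x) * c.x = a.x * (b.x * c.x)
      exact mul_assoc _ _ _
    · show ((a.ℓ * b.ℓ) * c.ℓ) y = (a.ℓ * (b.ℓ * c.ℓ)) y
      simp [mul_assoc]
  one_mul a := by
    ext y
    · show 1 * a.α * a.ℓ 1 = a.α; simp
    · show 1 * a.x = a.x; simp
    · show ((1 : H →* μ) * a.ℓ) y = a.ℓ y; simp
  mul_one a := by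
    ext y
    · show a.α * 1 * (1 : H →* μ) a.x = a.α; simp
    · show a.x * 1 = a.x; simp
    · show (a.ℓ * (1 : H →* μ)) y = a.ℓ y; simp
  inv_mul_cancel a := by
    ext y
    · show (a.α⁻¹ * a.ℓ a.x) * a.α * a.ℓ a.x⁻¹ = 1
      simp [map_inv, mul_comm, mul_left_comm]
    · exact inv_mul_cancel a.x
    · show (a.ℓ⁻¹ * a.ℓ) y = (1 : H →* μ) y; simp

end Heis

/-- The symplectic (commutator) pairing `e((x,ℓ),(x',ℓ')) = ℓ'(x)·ℓ(x')⁻¹` on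
`K = H ⊕ H^`. -/
def heisPairing {μ H : Type*} [CommGroup μ] [CommGroup H]
    (P Q : H × (H →* μ)) : μ :=
  Q.2 P.1 * (P.2 Q.1)⁻¹

/-- The "symmetrized" Heisenberg multiplication `𝓗'`, using `e^{1/2}` (i.e. `e^s`
with `2s ≡ 1 (mod n)`) in place of the 2-cocycle `f`. -/
def heisMul' {μ H : Type*} [CommGroup μ] [CommGroup H] (s : ℕ)
    (a b : Heis μ H) : Heis μ H :=
  ⟨a.α * b.α * (heisPairing (a.x, a.ℓ) (b.x, b.ℓ)) ^ s, a.x * b.x, a.ℓ * b.ℓ⟩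

/-- A symplectic automorphism of `K = H ⊕ H^`, i.e. one preserving the pairing `e`. -/
def IsSymplectic {μ H : Type*} [CommGroup μ] [CommGroup H]
    (g : MulAut (H × (H →* μ))) : Prop :=
  ∀ P Q : H × (H →* μ), heisPairing (g P) (g Q) = heisPairing P Q


section HeisSplitAux

variable {μ H : Type*} [CommGroup μ] [CommGroup H]

/-- Additive form of `u ^ (2σ-1) = 1`. -/
lemma heis_ofMul_aux {u : μ} (σ : ℤ) (h : u ^ (2*σ-1) = 1) :
    (2*σ-1) • Additive.ofMul u = 0 := by
  rw [← ofMul_zpow, h]; rfl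

/-- The underlying function of the action of a symplectic automorphism on `𝓗`. -/
def heisRhoFun (σ : ℤ) (g : MulAut (H × (H →* μ))) (a : Heis μ H) : Heis μ H :=
  ⟨a.α * (a.ℓ a.x) ^ (σ - 1) * ((g (a.x, a.ℓ)).2 (g (a.x, a.ℓ)).1) ^ (1 - σ),
   (g (a.x, a.ℓ)).1, (g (a.x, a.ℓ)).2⟩

lemma heisRhoFun_comp (σ : ℤ) (g h : MulAut (H × (H →* μ))) (a : Heis μ H) :
    heisRhoFun σ g (heisRhoFun σ h a) = heisRhoFun σ (g * h) a := by
  ext y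
  · show (a.α * (a.ℓ a.x) ^ (σ-1) * ((h (a.x,a.ℓ)).2 (h (a.x,a.ℓ)).1) ^ (1-σ))
        * ((h (a.x,a.ℓ)).2 (h (a.x,a.ℓ)).1) ^ (σ-1)
        * ((g (h (a.x,a.ℓ))).2 (g (h (a.x,a.ℓ))).1) ^ (1-σ)
      = a.α * (a.ℓ a.x) ^ (σ-1) * (((g*h) (a.x,a.ℓ)).2 ((g*h) (a.x,a.ℓ)).1) ^ (1-σ)
    rw [MulAut.mul_apply]
    apply Additive.ofMul.injective
    simp only [ofMul_mul, ofMul_zpow, smul_add]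
    module
  · show (g (h (a.x,a.ℓ))).1 = ((g*h) (a.x,a.ℓ)).1
    rw [MulAut.mul_apply]
  · show (g (h (a.x,a.ℓ))).2 y = ((g*h) (a.x,a.ℓ)).2 y
    rw [MulAut.mul_apply]

/-- The automorphism of `𝓗` attached to a symplectic automorphism of `K`. -/
def heisRhoAut (σ : ℤ) (hord : ∀ (ℓ : H →* μ) (x : H), (ℓ x) ^ (2*σ-1) = 1)
    (g : MulAut (H × (H →* μ))) (hg : IsSymplectic (μ := μ) g) : MulAut (Heis μ H) where
  toFun := heisRhoFun σ g
  invFun := heisRhoFun σ g⁻¹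
  left_inv a := by
    ext y
    · show (a.α * (a.ℓ a.x) ^ (σ-1) * ((g (a.x,a.ℓ)).2 (g (a.x,a.ℓ)).1) ^ (1-σ))
          * ((g (a.x,a.ℓ)).2 (g (a.x,a.ℓ)).1) ^ (σ-1)
          * ((g⁻¹ (g (a.x,a.ℓ))).2 (g⁻¹ (g (a.x,a.ℓ))).1) ^ (1-σ) = a.α
      rw [MulAut.inv_apply_self]
      apply Additive.ofMul.injective
      simp only [ofMul_mul, ofMul_zpow, smul_add]
      module
    · show (g⁻¹ (g (a.x,a.ℓ))).1 = a.x
      rw [MulAut.inv_apply_self]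
    · show (g⁻¹ (g (a.x,a.ℓ))).2 y = a.ℓ y
      rw [MulAut.inv_apply_self]
  right_inv a := by
    ext y
    · show (a.α * (a.ℓ a.x) ^ (σ-1) * ((g⁻¹ (a.x,a.ℓ)).2 (g⁻¹ (a.x,a.ℓ)).1) ^ (1-σ))
          * ((g⁻¹ (a.x,a.ℓ)).2 (g⁻¹ (a.x,a.ℓ)).1) ^ (σ-1)
          * ((g (g⁻¹ (a.x,a.ℓ))).2 (g (g⁻¹ (a.x,a.ℓ))).1) ^ (1-σ) = a.α
      rw [MulAut.apply_inv_self]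
      apply Additive.ofMul.injective
      simp only [ofMul_mul, ofMul_zpow, smul_add]
      module
    · show (g (g⁻¹ (a.x,a.ℓ))).1 = a.x
      rw [MulAut.apply_inv_self]
    · show (g (g⁻¹ (a.x,a.ℓ))).2 y = a.ℓ y
      rw [MulAut.apply_inv_self]
  map_mul' a b := by
    have he := hg (a.x, a.ℓ) (b.x, b.ℓ)
    simp only [heisPairing] at he
    have hAB : g ((a.x * b.x, a.ℓ * b.ℓ) : H × (H →* μ))
        = g (a.x, a.ℓ) * g (b.x, b.ℓ) := by
      rw [show ((a.x * b.x, a.ℓ * b.ℓ) : H × (H →* μ)) = (a.x, a.ℓ) * (b.x, b.ℓ) from rfl,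
        map_mul]
    ext y
    · show (a.α * b.α * b.ℓ a.x) * ((a.ℓ * b.ℓ) (a.x * b.x)) ^ (σ-1) *
          ((g ((a.x * b.x, a.ℓ * b.ℓ) : H × (H →* μ))).2
            (g ((a.x * b.x, a.ℓ * b.ℓ) : H × (H →* μ))).1) ^ (1-σ)
        = (a.α * (a.ℓ a.x) ^ (σ-1) * ((g (a.x,a.ℓ)).2 (g (a.x,a.ℓ)).1) ^ (1-σ))
          * (b.α * (b.ℓ b.x) ^ (σ-1) * ((g (b.x,b.ℓ)).2 (g (b.x,b.ℓ)).1) ^ (1-σ))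
          * (g (b.x,b.ℓ)).2 (g (a.x,a.ℓ)).1
      rw [hAB]
      simp only [Prod.fst_mul, Prod.snd_mul, MonoidHom.mul_apply, map_mul]
      have h1 : (2*σ-1) • Additive.ofMul (a.ℓ b.x) = 0 :=
        heis_ofMul_aux σ (hord _ _)
      have h2 : (2*σ-1) • Additive.ofMul ((g (a.x,a.ℓ)).2 (g (b.x,b.ℓ)).1) = 0 :=
        heis_ofMul_aux σ (hord _ _)
      have h3 : Additive.ofMul ((g (b.x,b.ℓ)).2 (g (a.x,a.ℓ)).1)
            - Additive.ofMul ((g (a.x,a.ℓ)).2 (g (b.x,b.ℓ)).1)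
          = Additive.ofMul (b.ℓ a.x) - Additive.ofMul (a.ℓ b.x) := by
        have := congrArg Additive.ofMul he
        simpa [ofMul_mul, ofMul_inv, sub_eq_add_neg] using this
      apply Additive.ofMul.injective
      simp only [ofMul_mul, ofMul_zpow, ofMul_inv, smul_add, smul_neg]
      linear_combination (norm := module) h1 - h2 - σ • h3
    · show (g ((a.x * b.x, a.ℓ * b.ℓ) : H × (H →* μ))).1
        = (g (a.x,a.ℓ)).1 * (g (b.x,b.ℓ)).1
      rw [hAB]; rfl
    · show (g ((a.x * b.x, a.ℓ * b.ℓ) : H × (H →* μ))).2 y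
        = ((g (a.x,a.ℓ)).2 * (g (b.x,b.ℓ)).2) y
      rw [hAB]; rfl

end HeisSplitAux

/-- Yu's isomorphism `Φ : 𝓗 ≅ 𝓗'` (for odd type `(n,…,n)`, `s` an inverse of `2` mod
`n`): `w₁w₂α ↦ (α·e(w̄₁,w̄₂)^{1/2}, w̄₁, w̄₂)`, i.e. `(α,x,ℓ) ↦ (α·ℓ(x)^{s-1}, x, ℓ)`,
is a group isomorphism which is the identity on the center and on the quotient `K`.
Consequently `Sp(K,e)` acts faithfully on `𝓗` by centrally trivial automorphisms, and
the sequence `1 → K^ → G₁ → Sp(K) → 1` splits. -/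
theorem heisenberg_sp_splitting {μ H : Type*} [CommGroup μ] [CommGroup H] [Finite H]
    (n : ℕ) (hodd : Odd n) (hn : Monoid.exponent H = n)
    (s : ℕ) (hs : (2 * s) % n = 1 % n) :
    (∃ Φ : Heis μ H ≃ Heis μ H,
      (∀ a b : Heis μ H, Φ (a * b) = heisMul' s (Φ a) (Φ b)) ∧
      (∀ a : Heis μ H, Φ a = ⟨a.α * (a.ℓ a.x) ^ ((s : ℤ) - 1), a.x, a.ℓ⟩) ∧
      (∀ α : μ, Φ ⟨α, 1, 1⟩ = ⟨α, 1, 1⟩) ∧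
      (∀ a : Heis μ H, (Φ a).x = a.x ∧ (Φ a).ℓ = a.ℓ)) ∧
    (∃ ρ : MulAut (H × (H →* μ)) → MulAut (Heis μ H),
      (∀ g h, IsSymplectic (μ := μ) g → IsSymplectic (μ := μ) h →
        ρ (g * h) = ρ g * ρ h) ∧
      (∀ g, IsSymplectic (μ := μ) g → ∀ α : μ, ρ g ⟨α, 1, 1⟩ = ⟨α, 1, 1⟩) ∧
      (∀ g, IsSymplectic (μ := μ) g → ∀ a : Heis μ H,
        ((ρ g) a).x = (g (a.x, a.ℓ)).1 ∧ ((ρ g) a).ℓ = (g (a.x, a.ℓ)).2) ∧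
      (∀ g, IsSymplectic (μ := μ) g → ρ g = 1 → g = 1)) := by
  classical
  -- the order fact: every value of a character has order dividing `2s-1`-killing exponent
  have hord : ∀ (ℓ : H →* μ) (x : H), (ℓ x) ^ (2*(s:ℤ)-1) = 1 := by
    intro ℓ x
    have hx : x ^ n = 1 := by rw [← hn]; exact Monoid.pow_exponent_eq_one x
    have hbase : (ℓ x) ^ n = 1 := by rw [← map_pow, hx, map_one]
    have hdvd : (n:ℤ) ∣ 2*(s:ℤ) - 1 := by
      obtain ⟨k, hk⟩ := (Nat.modEq_iff_dvd (a := 2*s) (b := 1) (n := n)).mp hs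
      exact ⟨-k, by push_cast at hk ⊢; linarith⟩
    obtain ⟨k, hk⟩ := hdvd
    rw [hk, zpow_mul, zpow_natCast, hbase, one_zpow]
  constructor
  · -- the isomorphism Φ
    refine ⟨⟨fun a => ⟨a.α * (a.ℓ a.x) ^ ((s:ℤ) - 1), a.x, a.ℓ⟩,
        fun a => ⟨a.α * (a.ℓ a.x) ^ (1 - (s:ℤ)), a.x, a.ℓ⟩, ?_, ?_⟩, ?_, ?_, ?_, ?_⟩
    · intro a
      ext y
      · show a.α * (a.ℓ a.x) ^ ((s:ℤ) - 1) * (a.ℓ a.x) ^ (1 - (s:ℤ)) = a.α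
        rw [mul_assoc, ← zpow_add]
        norm_num
      · rfl
      · rfl
    · intro a
      ext y
      · show a.α * (a.ℓ a.x) ^ (1 - (s:ℤ)) * (a.ℓ a.x) ^ ((s:ℤ) - 1) = a.α
        rw [mul_assoc, ← zpow_add]
        norm_num
      · rfl
      · rfl
    · intro a b
      ext y
      · show (a.α * b.α * b.ℓ a.x) * ((a.ℓ * b.ℓ) (a.x * b.x)) ^ ((s:ℤ)-1)
          = (a.α * (a.ℓ a.x) ^ ((s:ℤ)-1)) * (b.α * (b.ℓ b.x) ^ ((s:ℤ)-1))
            * (heisPairing (a.x, a.ℓ) (b.x, b.ℓ)) ^ s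
        simp only [MonoidHom.mul_apply, map_mul, heisPairing]
        have h1 : (2*(s:ℤ)-1) • Additive.ofMul (a.ℓ b.x) = 0 :=
          heis_ofMul_aux _ (hord _ _)
        apply Additive.ofMul.injective
        simp only [ofMul_mul, ofMul_zpow, ofMul_pow, ofMul_inv, smul_add, smul_neg]
        linear_combination (norm := module) h1
      · rfl
      · rfl
    · intro a; rfl
    · intro α
      ext y
      · show α * ((1 : H →* μ) (1 : H)) ^ ((s:ℤ)-1) = α
        simp
      · rfl
      · rfl
    · intro a; exact ⟨rfl, rfl⟩
  · -- the splitting ρ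
    have hmulsymp : ∀ g h : MulAut (H × (H →* μ)), IsSymplectic (μ := μ) g →
        IsSymplectic (μ := μ) h → IsSymplectic (μ := μ) (g * h) := by
      intro g h hg hh P Q
      rw [MulAut.mul_apply, MulAut.mul_apply, hg, hh]
    refine ⟨fun g => if hg : IsSymplectic (μ := μ) g
        then heisRhoAut (s:ℤ) hord g hg else 1, ?_, ?_, ?_, ?_⟩
    · intro g h hg hh
      simp only [dif_pos hg, dif_pos hh, dif_pos (hmulsymp g h hg hh)]
      refine MulEquiv.ext fun a => ?_
      rw [MulAut.mul_apply]
      exact (heisRhoFun_comp (s:ℤ) g h a).symm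
    · intro g hg α
      simp only [dif_pos hg]
      show heisRhoFun (s:ℤ) g ⟨α, 1, 1⟩ = ⟨α, 1, 1⟩
      have h1 : g (1, 1) = ((1, 1) : H × (H →* μ)) := map_one g
      ext y
      · show α * ((1 : H →* μ) (1:H)) ^ ((s:ℤ)-1)
            * ((g ((1,1) : H × (H →* μ))).2 (g ((1,1) : H × (H →* μ))).1) ^ (1-(s:ℤ)) = α
        rw [h1]
        simp
      · show (g ((1,1) : H × (H →* μ))).1 = 1
        rw [h1]
      · show (g ((1,1) : H × (H →* μ))).2 y = (1 : H →* μ) y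
        rw [h1]
    · intro g hg a
      simp only [dif_pos hg]
      exact ⟨rfl, rfl⟩
    · intro g hg hρ
      simp only [dif_pos hg] at hρ
      have key : ∀ P : H × (H →* μ), g P = P := by
        intro P
        have h0 := DFunLike.congr_fun hρ ⟨1, P.1, P.2⟩
        have h1 : (g P).1 = P.1 := congrArg Heis.x h0
        have h2 : (g P).2 = P.2 := congrArg Heis.ℓ h0
        exact Prod.ext h1 h2
      exact MulEquiv.ext key
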